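/- arXiv:2304.04627 — 3 statements merged into one kernel-verified Lean document; each statement's English description precedes it below -/
import Mathlib

section
/- Define a left action of the braid group B_n on (ℤ/rℤ)^n by letting each generator σ_i act via the transposition (i, i+1) permuting coordinates (the action factors through S_n). Then the map φ_r : B_n → (ℤ/rℤ)^n determined by φ_r(σ_i) = e_{i+1} on the standard Artin generators extends to a well-defined crossed homomorphism, i.e. φ_r(αβ) = φ_r(α) + α·φ_r(β) for all α, β ∈ B_n. -/
/-- The braid relations on `m` generators `σ_1, ..., σ_m` (indexed here by `Fin m`):
`σ i σ j = σ j σ i` for `|i - j| ≥ 2` and `σ i σ (i+1) σ i = σ (i+1) σ i σ (i+1)`. -/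
def braidRels (m : ℕ) : Set (FreeGroup (Fin m)) :=
  { w | (∃ i j : Fin m, (i : ℕ) + 2 ≤ (j : ℕ) ∧
          w = FreeGroup.of i * FreeGroup.of j * (FreeGroup.of i)⁻¹ * (FreeGroup.of j)⁻¹) ∨
        (∃ i j : Fin m, (i : ℕ) + 1 = (j : ℕ) ∧
          w = FreeGroup.of i * FreeGroup.of j * FreeGroup.of i *
              (FreeGroup.of j * FreeGroup.of i * FreeGroup.of j)⁻¹) }

/-- The braid group on `m + 1` strands, presented with `m` Artin generators.
`BraidGroup (n-1)` is the braid group `B_n`. -/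
abbrev BraidGroup (m : ℕ) : Type := PresentedGroup (braidRels m)

/-- The `k`-th Artin generator (`0`-indexed: `braidGen k` is the Artin generator
`σ_{k+1}` of the paper, braiding strands `k` and `k+1` in `0`-indexed numbering);
junk value `1` if `k` is out of range. -/
def braidGen {m : ℕ} (k : ℕ) : BraidGroup m :=
  if h : k < m then PresentedGroup.of (⟨k, h⟩ : Fin m) else 1

/-! Pairing `φ` with `π` turns the crossed-homomorphism identity into multiplicativity of
`α ↦ (φ α, π α)` into the wreath product `(Fin n → ℤ/r) ⋊ Sₙ`, whose product is
`(v, p) (w, q) = (v + p • w, p q)`. So it suffices to check that the elements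
`(e_{i+1}, (i i+1))` satisfy the braid relations there. Far-apart ones commute because their
transpositions are disjoint and fix each other's basis vectors; for adjacent ones `(e_b, (a b))`
and `(e_c, (b c))` both sides of the braid relation equal `(e_b + 2 e_c, (a c))`. -/

namespace BraidGroup

variable {G : Type*} [Group G] {m : ℕ} (f : Fin m → G)
  (hcomm : ∀ i j : Fin m, (i : ℕ) + 2 ≤ j → Commute (f i) (f j))
  (hbraid : ∀ i j : Fin m, (i : ℕ) + 1 = j → f i * f j * f i = f j * f i * f j)

def lift : BraidGroup m →* G :=
  PresentedGroup.toGroup (f := f) <| by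
    rintro w (⟨i, j, hij, rfl⟩ | ⟨i, j, hij, rfl⟩) <;>
      simp only [map_mul, map_inv, FreeGroup.lift_apply_of]
    · rw [mul_inv_eq_one, mul_inv_eq_iff_eq_mul]
      exact hcomm i j hij
    · rw [mul_inv_eq_one]
      exact hbraid i j hij

theorem lift_braidGen {k : ℕ} (hk : k < m) :
    lift f hcomm hbraid (braidGen k) = f ⟨k, hk⟩ := by
  rw [braidGen, dif_pos hk]
  exact PresentedGroup.toGroup.of _

end BraidGroup

section SwapMulSingle

open Equiv

variable {ι H : Type*} [DecidableEq ι] [Group H]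

theorem mulAutArrow_mulSingle (p : Perm ι) (a : ι) (h : H) :
    mulAutArrow p (Pi.mulSingle a h) = Pi.mulSingle (p a) h :=
  Pi.mulSingle_comp_equiv p.symm a h

def swapMulSingle (h : H) (a b : ι) : (ι → H) ⋊[mulAutArrow] Perm ι :=
  ⟨Pi.mulSingle b h, swap a b⟩

theorem commute_swapMulSingle (h : H) {a b c d : ι} (habcd : [a, b, c, d].Nodup) :
    Commute (swapMulSingle h a b) (swapMulSingle h c d) := by
  refine SemidirectProduct.ext ?_ (Perm.disjoint_swap_swap habcd).commute
  simp only [List.nodup_cons, List.mem_cons, List.not_mem_nil, or_false, not_or] at habcd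
  obtain ⟨⟨-, -, had⟩, ⟨hbc, hbd⟩, -⟩ := habcd
  simp only [swapMulSingle, SemidirectProduct.mul_left, mulAutArrow_mulSingle,
    swap_apply_of_ne_of_ne (Ne.symm had) (Ne.symm hbd), swap_apply_of_ne_of_ne hbc hbd]
  exact (Pi.mulSingle_commute (f := fun _ : ι => H) hbd h h).eq

theorem swapMulSingle_braid (h : H) {a b c : ι} (hab : a ≠ b) (hac : a ≠ c) (hbc : b ≠ c) :
    swapMulSingle h a b * swapMulSingle h b c * swapMulSingle h a b =
      swapMulSingle h b c * swapMulSingle h a b * swapMulSingle h b c := by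
  refine SemidirectProduct.ext ?_ ?_
  · simp only [swapMulSingle, SemidirectProduct.mul_left, SemidirectProduct.mul_right, map_mul,
      MulAut.mul_apply, mulAutArrow_mulSingle, swap_apply_left, swap_apply_right,
      swap_apply_of_ne_of_ne hac.symm hbc.symm]
    rw [mul_assoc]
    have hbc' := Pi.mulSingle_commute (f := fun _ : ι => H) hbc h h
    exact (hbc'.mul_right hbc').eq
  · simp only [swapMulSingle, SemidirectProduct.mul_right]
    rw [swap_mul_swap_mul_swap hab hac, ← swap_comm b a, ← swap_comm c b,
      swap_mul_swap_mul_swap hbc.symm hac.symm, swap_comm]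

end SwapMulSingle

namespace BraidGroup

variable {H : Type*} [Group H]

def toWreath (h : H) (n : ℕ) :
    BraidGroup (n - 1) →* (Fin n → H) ⋊[mulAutArrow] Equiv.Perm (Fin n) :=
  lift (fun i => swapMulSingle h ⟨i, by omega⟩ ⟨i + 1, by omega⟩)
    (fun i j hij => commute_swapMulSingle h (by
      simp only [List.nodup_cons, List.mem_cons, List.not_mem_nil, List.nodup_nil, or_false,
        not_false_eq_true, and_true, Fin.ext_iff]
      omega))
    (fun i j hij => by
      obtain ⟨j, hj⟩ := j
      obtain rfl : (i : ℕ) + 1 = j := hij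
      refine swapMulSingle_braid h ?_ ?_ ?_ <;> simp only [Ne, Fin.ext_iff] <;> omega)

theorem toWreath_braidGen (h : H) {n k : ℕ} (hk : k + 1 < n) :
    toWreath h n (braidGen k) = swapMulSingle h ⟨k, Nat.lt_of_succ_lt hk⟩ ⟨k + 1, hk⟩ :=
  lift_braidGen _ _ _ (by omega)

end BraidGroup

/-- With `B_n` acting on `(ℤ/rℤ)ⁿ` through the permutation representation
`π : B_n → S_n` (each `σ_i` mapping to the transposition `(i, i+1)`), the assignment
`φ_r(σ_i) = e_{i+1}` extends to a well-defined crossed homomorphism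
`φ_r : B_n → (ℤ/rℤ)ⁿ`, i.e. `φ_r(αβ) = φ_r(α) + α·φ_r(β)` for all `α, β`.
(All indices are `0`-based: the generator `braidGen k` is the paper's `σ_{k+1}`, its
permutation image is the transposition of positions `k, k+1`, and its `φ_r`-value is the
standard basis vector at position `k+1`.) -/
theorem stmt_3 (n r : ℕ) :
    ∃ (π : BraidGroup (n - 1) →* Equiv.Perm (Fin n))
      (φ : BraidGroup (n - 1) → (Fin n → ZMod r)),
      (∀ k : ℕ, ∀ hk : k + 1 < n,
        π (braidGen k) = Equiv.swap ⟨k, by omega⟩ ⟨k + 1, hk⟩) ∧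
      (∀ k : ℕ, ∀ hk : k + 1 < n,
        φ (braidGen k) = Pi.single (⟨k + 1, hk⟩ : Fin n) 1) ∧
      (∀ α β : BraidGroup (n - 1),
        φ (α * β) = φ α + fun t => φ β ((π α)⁻¹ t)) := by
  let F := BraidGroup.toWreath (Multiplicative.ofAdd (1 : ZMod r)) n
  refine ⟨SemidirectProduct.rightHom.comp F, fun α t => ((F α).left t).toAdd, ?_, ?_, ?_⟩
  · intro k hk
    simp [F, BraidGroup.toWreath_braidGen _ hk, swapMulSingle]
  · intro k hk
    funext t
    simp only [F, BraidGroup.toWreath_braidGen _ hk, swapMulSingle]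
    exact congrArg Multiplicative.toAdd (Pi.mulSingle_multiplicativeOfAdd_eq _ _ t)
  · intro α β
    funext t
    simp only [map_mul]
    rfl
end

section
/- Let a, b be positive integers and G ≤ B_{a+b+1} the subgroup generated by Σ_{1;a} = σ_1⋯σ_a and Σ_{a+1;b} = σ_{a+1}⋯σ_{a+b}. Then Σ_{1;gcd(a,b)} = σ_1⋯σ_{gcd(a,b)} belongs to G. -/
/-- The conjugating word `σ_{b-1} ⋯ σ_{a+1}` (0-indexed generators) used in the standard
pure braid generators. -/
def conjPart {m : ℕ} (a b : ℕ) : BraidGroup m :=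
  ((List.range (b - 1 - a)).map (fun t => braidGen (m := m) (b - 1 - t))).prod

/-- The standard pure braid generator `A_{ab}` (`0`-indexed strands `a < b`), i.e. the
paper's `A_{ij} = (σ_{j-1} ⋯ σ_{i+1}) σ_i² (σ_{j-1} ⋯ σ_{i+1})⁻¹` with `i = a+1`, `j = b+1`. -/
def pureGen {m : ℕ} (a b : ℕ) : BraidGroup m :=
  conjPart a b * braidGen a * braidGen a * (conjPart a b)⁻¹

/-- The basic twist `Σ_{a+1;r} = σ_{a+1} σ_{a+2} ⋯ σ_{a+r}` of the paper, with `0`-indexed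
starting strand `a`: the product `braidGen a * braidGen (a+1) * ⋯ * braidGen (a+r-1)`. -/
def basicTwist {m : ℕ} (a r : ℕ) : BraidGroup m :=
  ((List.range r).map (fun t => braidGen (m := m) (a + t))).prod

namespace BraidAux

variable {m : ℕ}

lemma rel_one {α : Type*} {rels : Set (FreeGroup α)} {r : FreeGroup α} (h : r ∈ rels) :
    PresentedGroup.mk rels r = 1 :=
  (QuotientGroup.eq_one_iff r).2 (Subgroup.subset_normalClosure h)

lemma braidGen_of {k : ℕ} (h : k < m) :
    braidGen (m := m) k = PresentedGroup.of (⟨k, h⟩ : Fin m) := dif_pos h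

lemma braidGen_one {k : ℕ} (h : ¬ k < m) : braidGen (m := m) k = 1 := dif_neg h

lemma braid_comm (k l : ℕ) (h : k + 2 ≤ l) :
    Commute (braidGen (m := m) k) (braidGen l) := by
  by_cases hl : l < m
  · have hk : k < m := by omega
    have hr : (FreeGroup.of (⟨k, hk⟩ : Fin m) * FreeGroup.of (⟨l, hl⟩ : Fin m) *
        (FreeGroup.of (⟨k, hk⟩ : Fin m))⁻¹ * (FreeGroup.of (⟨l, hl⟩ : Fin m))⁻¹) ∈ braidRels m :=
      Or.inl ⟨⟨k, hk⟩, ⟨l, hl⟩, h, rfl⟩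
    have h1 := rel_one hr
    simp only [map_mul, map_inv] at h1
    have h2 : PresentedGroup.of (rels := braidRels m) ⟨k, hk⟩ *
        PresentedGroup.of ⟨l, hl⟩ * (PresentedGroup.of ⟨k, hk⟩)⁻¹ *
        (PresentedGroup.of ⟨l, hl⟩)⁻¹ = 1 := h1
    rw [mul_inv_eq_one, mul_inv_eq_iff_eq_mul] at h2
    rw [braidGen_of hk, braidGen_of hl]
    exact h2
  · rw [braidGen_one hl]
    exact Commute.one_right _

lemma braid_braid (k : ℕ) (h : k + 1 < m) :
    SemiconjBy (braidGen (m := m) k * braidGen (k+1)) (braidGen k) (braidGen (k+1)) := by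
  have hk : k < m := by omega
  have hr : (FreeGroup.of (⟨k, hk⟩ : Fin m) * FreeGroup.of (⟨k+1, h⟩ : Fin m) *
      FreeGroup.of (⟨k, hk⟩ : Fin m) *
      (FreeGroup.of (⟨k+1, h⟩ : Fin m) * FreeGroup.of (⟨k, hk⟩ : Fin m) *
        FreeGroup.of (⟨k+1, h⟩ : Fin m))⁻¹) ∈ braidRels m :=
    Or.inr ⟨⟨k, hk⟩, ⟨k+1, h⟩, rfl, rfl⟩
  have h1 := rel_one hr
  simp only [map_mul, map_inv] at h1
  have h2 : PresentedGroup.of (rels := braidRels m) ⟨k, hk⟩ *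
      PresentedGroup.of ⟨k+1, h⟩ * PresentedGroup.of ⟨k, hk⟩ *
      (PresentedGroup.of ⟨k+1, h⟩ * PresentedGroup.of ⟨k, hk⟩ *
        PresentedGroup.of ⟨k+1, h⟩)⁻¹ = 1 := h1
  rw [mul_inv_eq_one] at h2
  unfold SemiconjBy
  rw [braidGen_of hk, braidGen_of h, ← mul_assoc]
  exact h2

lemma bt_zero (p : ℕ) : basicTwist (m := m) p 0 = 1 := by simp [basicTwist]

lemma bt_succ (p r : ℕ) :
    basicTwist (m := m) p (r+1) = basicTwist p r * braidGen (p + r) := by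
  simp [basicTwist, List.range_succ]

lemma bt_concat (p x y : ℕ) :
    basicTwist (m := m) p (x + y) = basicTwist p x * basicTwist (p + x) y := by
  induction y with
  | zero => simp [bt_zero]
  | succ y ih =>
    rw [show x + (y+1) = (x + y) + 1 from rfl, bt_succ, ih, bt_succ, mul_assoc,
      Nat.add_assoc]

end BraidAux

namespace BraidAux
variable {m : ℕ}

/-- `σ_k` commutes with `Σ` starting at `j ≥ k+2`. -/
lemma gen_comm_twist (k j q : ℕ) (h : k + 2 ≤ j) :
    Commute (braidGen (m := m) k) (basicTwist j q) := by
  induction q with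
  | zero => rw [bt_zero]; exact Commute.one_right _
  | succ q ih => rw [bt_succ]; exact ih.mul_right (braid_comm k (j + q) (by omega))

/-- `Σ_{p;q}` commutes with `σ_l` for `l ≥ p+q+1`. -/
lemma twist_comm_gen (p q l : ℕ) (h : p + q + 1 ≤ l) :
    Commute (basicTwist (m := m) p q) (braidGen l) := by
  induction q with
  | zero => rw [bt_zero]; exact Commute.one_left _
  | succ q ih =>
    rw [bt_succ]
    exact (ih (by omega)).mul_left (braid_comm (p + q) l (by omega))

/-- The full twist `δ = Σ_{0;m}` shifts a generator: `δ σ_k δ⁻¹ = σ_{k+1}`. -/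
lemma delta_semiconj_gen (k : ℕ) (h : k + 1 < m) :
    SemiconjBy (basicTwist (m := m) 0 m) (braidGen k) (braidGen (k+1)) := by
  have e1 : basicTwist (m := m) 0 m =
      basicTwist 0 k * (braidGen k * braidGen (k+1)) * basicTwist (k+2) (m - (k+2)) := by
    have : m = (k + 2) + (m - (k+2)) := by omega
    rw [show basicTwist (m := m) 0 m = basicTwist 0 ((k+2) + (m - (k+2))) by rw [← this]]
    rw [bt_concat, Nat.zero_add]
    congr 1
    rw [show k + 2 = k + (1 + 1) from rfl, ← Nat.add_assoc, bt_succ, bt_succ,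
      Nat.zero_add, Nat.zero_add, mul_assoc]
  rw [e1]
  have hB : SemiconjBy (basicTwist (m := m) (k+2) (m - (k+2))) (braidGen k) (braidGen k) :=
    ((gen_comm_twist k (k+2) (m - (k+2)) (by omega)).symm).semiconjBy
  have hA : SemiconjBy (basicTwist (m := m) 0 k * (braidGen k * braidGen (k+1)))
      (braidGen k) (braidGen (k+1)) :=
    SemiconjBy.mul_left ((twist_comm_gen 0 k (k+1) (by omega)).semiconjBy) (braid_braid k h)
  exact SemiconjBy.mul_left hA hB

/-- `δ Σ_{p;q} δ⁻¹ = Σ_{p+1;q}` when `p + q < m`. -/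
lemma delta_semiconj_twist (p q : ℕ) (h : p + q < m) :
    SemiconjBy (basicTwist (m := m) 0 m) (basicTwist p q) (basicTwist (p+1) q) := by
  induction q with
  | zero => rw [bt_zero, bt_zero]; exact SemiconjBy.one_right _
  | succ q ih =>
    rw [bt_succ, bt_succ]
    refine SemiconjBy.mul_right (ih (by omega)) ?_
    rw [show p + 1 + q = (p + q) + 1 by omega]
    exact delta_semiconj_gen (p + q) (by omega)

lemma delta_pow_semiconj (j p q : ℕ) (h : p + q + j ≤ m) :
    SemiconjBy ((basicTwist (m := m) 0 m) ^ j) (basicTwist p q) (basicTwist (p+j) q) := by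
  induction j with
  | zero => rw [pow_zero, Nat.add_zero]; exact SemiconjBy.one_left _
  | succ j ih =>
    rw [pow_succ']
    have h1 := delta_semiconj_twist (m := m) (p + j) q (by omega)
    have h2 := ih (show p + q + j ≤ m by omega)
    rw [show p + (j+1) = (p + j) + 1 by omega]
    exact SemiconjBy.mul_left h1 h2

lemma twist_shift_eq (j p q : ℕ) (h : p + q + j ≤ m) :
    basicTwist (m := m) (p + j) q =
      (basicTwist 0 m) ^ j * basicTwist p q * ((basicTwist (m := m) 0 m) ^ j)⁻¹ := by
  have := (delta_pow_semiconj j p q h).eq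
  rw [this, mul_assoc, mul_inv_cancel, mul_one]

end BraidAux

namespace BraidAux
variable {m : ℕ}

lemma step_sub (G : Subgroup (BraidGroup m)) (hδ : basicTwist 0 m ∈ G)
    (x y : ℕ) (hy : 0 < y) (hyx : y < x) (hxm : x ≤ m)
    (hx : basicTwist 0 x ∈ G) (hyG : basicTwist 0 y ∈ G) :
    basicTwist (m := m) 0 (x - y) ∈ G := by
  have e1 : basicTwist (m := m) 0 x = basicTwist 0 y * basicTwist y (x - y) := by
    rw [show x = y + (x - y) by omega, bt_concat, Nat.zero_add]
    rw [show y + (x - y) - y = x - y by omega]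
  have e2 : basicTwist (m := m) y (x - y) =
      (basicTwist 0 m) ^ y * basicTwist 0 (x - y) * ((basicTwist (m := m) 0 m) ^ y)⁻¹ := by
    have := twist_shift_eq (m := m) y 0 (x - y) (by omega)
    rwa [Nat.zero_add] at this
  have e3 : basicTwist (m := m) 0 (x - y) =
      ((basicTwist (m := m) 0 m) ^ y)⁻¹ * ((basicTwist 0 y)⁻¹ * basicTwist 0 x) *
        (basicTwist 0 m) ^ y := by
    rw [e1, e2]
    group
  rw [e3]
  exact G.mul_mem (G.mul_mem (G.inv_mem (G.pow_mem hδ y))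
    (G.mul_mem (G.inv_mem hyG) hx)) (G.pow_mem hδ y)

lemma euclid (G : Subgroup (BraidGroup m)) (hδ : basicTwist 0 m ∈ G) :
    ∀ n x y : ℕ, x + y ≤ n → 0 < x → 0 < y → x ≤ m → y ≤ m →
      basicTwist 0 x ∈ G → basicTwist 0 y ∈ G →
      basicTwist (m := m) 0 (Nat.gcd x y) ∈ G := by
  intro n
  induction n with
  | zero => intro x y h hx; omega
  | succ n ih =>
    intro x y hn hx hy hxm hym hxG hyG
    rcases lt_trichotomy x y with hlt | heq | hgt
    · rw [show Nat.gcd x y = Nat.gcd x (y - x) from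
        (Nat.gcd_sub_self_right (le_of_lt hlt)).symm]
      exact ih x (y - x) (by omega) hx (by omega) hxm (by omega) hxG
        (step_sub G hδ y x hx hlt hym hyG hxG)
    · rw [heq, Nat.gcd_self]; exact hyG
    · rw [show Nat.gcd x y = Nat.gcd (x - y) y from
        (Nat.gcd_sub_self_left (le_of_lt hgt)).symm]
      exact ih (x - y) y (by omega) (by omega) hy (by omega) hym
        (step_sub G hδ x y hy hgt hxm hxG hyG) hyG

end BraidAux

/-- for positive integers `a, b`, in the braid group `B_{a+b+1}`
(here `BraidGroup (a+b)`, on `a+b+1` strands), the subgroup generated by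
`Σ_{1;a} = σ_1 ⋯ σ_a` and `Σ_{a+1;b} = σ_{a+1} ⋯ σ_{a+b}` contains
`Σ_{1;gcd(a,b)} = σ_1 ⋯ σ_{gcd(a,b)}`. -/
theorem stmt_12 (a b : ℕ) (ha : 0 < a) (hb : 0 < b) :
    (basicTwist 0 (Nat.gcd a b) : BraidGroup (a + b)) ∈
      Subgroup.closure {(basicTwist 0 a : BraidGroup (a + b)), basicTwist a b} := by
  set m := a + b with hm
  set G := Subgroup.closure {(basicTwist 0 a : BraidGroup m), basicTwist a b} with hG
  have hA : (basicTwist 0 a : BraidGroup m) ∈ G :=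
    Subgroup.subset_closure (Set.mem_insert _ _)
  have hB : (basicTwist a b : BraidGroup m) ∈ G :=
    Subgroup.subset_closure (Set.mem_insert_of_mem _ rfl)
  have eδ : (basicTwist 0 m : BraidGroup m) = basicTwist 0 a * basicTwist a b := by
    have e := BraidAux.bt_concat (m := m) 0 a b
    rwa [Nat.zero_add] at e
  have hδ : (basicTwist 0 m : BraidGroup m) ∈ G := by
    rw [eδ]; exact G.mul_mem hA hB
  have eδ' : (basicTwist 0 m : BraidGroup m) = basicTwist 0 b * basicTwist b a := by
    have e := BraidAux.bt_concat (m := m) 0 b a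
    rw [Nat.zero_add, Nat.add_comm b a, ← hm] at e
    exact e
  have hba : (basicTwist b a : BraidGroup m) ∈ G := by
    have e := BraidAux.twist_shift_eq (m := m) b 0 a (by omega)
    rw [Nat.zero_add] at e
    rw [e]
    exact G.mul_mem (G.mul_mem (G.pow_mem hδ b) hA) (G.inv_mem (G.pow_mem hδ b))
  have hbG : (basicTwist 0 b : BraidGroup m) ∈ G := by
    have e : (basicTwist 0 b : BraidGroup m) = basicTwist 0 m * (basicTwist b a)⁻¹ := by
      rw [eδ']; group
    rw [e]
    exact G.mul_mem hδ (G.inv_mem hba)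
  exact BraidAux.euclid G hδ (a + b) a b le_rfl ha hb (by omega) (by omega) hA hbG
end

section
/- For r even, the image in S_n of the kernel of the crossed homomorphism φ_r : B_n → (ℤ/rℤ)^n is contained in the alternating group A_n. -/
set_option maxRecDepth 100000
set_option maxHeartbeats 2000000

section Aux

lemma swap_disj_comm' {α} [DecidableEq α] {a b c d : α} (hac : a ≠ c) (had : a ≠ d)
    (hbc : b ≠ c) (hbd : b ≠ d) :
    Equiv.swap a b * Equiv.swap c d = Equiv.swap c d * Equiv.swap a b := by
  have h : (Equiv.swap a b).Disjoint (Equiv.swap c d) := by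
    intro x
    rcases eq_or_ne x a with rfl | h1
    · right; exact Equiv.swap_apply_of_ne_of_ne hac had
    rcases eq_or_ne x b with rfl | h2
    · right; exact Equiv.swap_apply_of_ne_of_ne hbc hbd
    · left; exact Equiv.swap_apply_of_ne_of_ne h1 h2
  exact h.commute.eq

lemma swap_braid' {α} [DecidableEq α] {a b c : α} (hab : a ≠ b) (hbc : b ≠ c) (hac : a ≠ c) :
    Equiv.swap a b * Equiv.swap b c * Equiv.swap a b
      = Equiv.swap b c * Equiv.swap a b * Equiv.swap b c := by
  rw [Equiv.swap_comm a b, Equiv.swap_comm b c,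
    Equiv.swap_mul_swap_mul_swap hbc.symm (Ne.symm hac),
    Equiv.swap_comm c b, Equiv.swap_comm b a,
    Equiv.swap_mul_swap_mul_swap hab (Ne.symm hac).symm, Equiv.swap_comm]

variable (n r : ℕ)

/-- the action of `Perm (Fin n)` on `(Fin n → ZMod r)` (viewed multiplicatively)
given by `f ↦ f ∘ σ⁻¹`. -/
def mAct : Equiv.Perm (Fin n) →* MulAut (Multiplicative (Fin n → ZMod r)) where
  toFun σ :=
    { toFun := fun f t => f (σ⁻¹ t)
      invFun := fun f t => f (σ t)
      left_inv := fun f => by funext t; simp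
      right_inv := fun f => by funext t; simp
      map_mul' := fun f g => rfl }
  map_one' := by ext f; rfl
  map_mul' := fun σ τ => by ext f; rfl

/-- the group `(ZMod r)ⁿ ⋊ Sₙ`. -/
abbrev Gsd := Multiplicative (Fin n → ZMod r) ⋊[mAct n r] Equiv.Perm (Fin n)

lemma mulApply (f g : Multiplicative (Fin n → ZMod r)) (t : Fin n) :
    (f * g) t = f t + g t := rfl

lemma actApply (σ : Equiv.Perm (Fin n)) (f : Multiplicative (Fin n → ZMod r)) (t : Fin n) :
    (mAct n r σ f) t = f (σ⁻¹ t) := rfl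

/-- the image of the `i`-th Artin generator in `(ZMod r)ⁿ ⋊ Sₙ`. -/
def gens (i : Fin (n - 1)) : Gsd n r :=
  ⟨Pi.single (⟨(i : ℕ) + 1, by omega⟩ : Fin n) (1 : ZMod r),
   Equiv.swap (⟨(i : ℕ), by omega⟩ : Fin n) ⟨(i : ℕ) + 1, by omega⟩⟩

lemma gens_comm (i j : Fin (n - 1)) (hij : (i : ℕ) + 2 ≤ (j : ℕ)) :
    gens n r i * gens n r j = gens n r j * gens n r i := by
  apply SemidirectProduct.ext
  · show (_ * _) = (_ * _)
    funext t
    rw [mulApply, mulApply, actApply, actApply]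
    simp only [gens, Equiv.swap_inv, Pi.single_apply, Equiv.swap_apply_def, Fin.ext_iff,
      Fin.val_mk]
    split_ifs <;> simp only [Fin.val_mk] at *
    all_goals try ring
    all_goals (exfalso; omega)
  · show (_ * _) = (_ * _)
    simp only [SemidirectProduct.mul_right, gens]
    apply swap_disj_comm' <;> simp [Fin.ext_iff] <;> omega
  done

lemma gens_braid (i j : Fin (n - 1)) (hij : (i : ℕ) + 1 = (j : ℕ)) :
    gens n r i * gens n r j * gens n r i = gens n r j * gens n r i * gens n r j := by
  have hj : (⟨(j : ℕ), by omega⟩ : Fin n) = ⟨(i : ℕ) + 1, by omega⟩ := by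
    simp [Fin.ext_iff]; omega
  have hab : (⟨(i : ℕ), by omega⟩ : Fin n) ≠ ⟨(i : ℕ) + 1, by omega⟩ := by simp [Fin.ext_iff]
  have hbc : (⟨(i : ℕ) + 1, by omega⟩ : Fin n) ≠ ⟨(j : ℕ) + 1, by omega⟩ := by
    simp [Fin.ext_iff]; omega
  have hac : (⟨(i : ℕ), by omega⟩ : Fin n) ≠ ⟨(j : ℕ) + 1, by omega⟩ := by
    simp [Fin.ext_iff]; omega
  apply SemidirectProduct.ext
  · show (_ * _) = (_ * _)
    funext t
    simp only [SemidirectProduct.mul_left, SemidirectProduct.mul_right, mulApply, actApply]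
    simp only [gens, hj, mul_inv_rev, Equiv.swap_inv, Equiv.Perm.mul_apply]
    rcases eq_or_ne t ⟨(i : ℕ), by omega⟩ with h1 | h1 <;>
    rcases eq_or_ne t ⟨(i : ℕ) + 1, by omega⟩ with h2 | h2 <;>
    rcases eq_or_ne t ⟨(j : ℕ) + 1, by omega⟩ with h3 | h3 <;>
      simp [h1, h2, h3, hab, hbc, hac, Ne.symm hab, Ne.symm hbc, Ne.symm hac,
        Pi.single_apply, Equiv.swap_apply_left, Equiv.swap_apply_right,
        Equiv.swap_apply_of_ne_of_ne] <;>
      first | rfl | ring | (exfalso; simp [Fin.ext_iff] at h1 h2 h3; omega)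
  · show (_ * _) = (_ * _)
    simp only [SemidirectProduct.mul_right, gens, hj]
    exact swap_braid' hab hbc hac

end Aux

/-- for `r` even, the image in `S_n` of the kernel of the crossed
homomorphism `φ_r : B_n → (ℤ/rℤ)ⁿ` under the permutation representation
`π : B_n → S_n` is contained in the alternating group `A_n`. -/
theorem stmt_18 (n r : ℕ) (hn : 2 ≤ n) (hr : 2 ∣ r) :
    ∃ (π : BraidGroup (n - 1) →* Equiv.Perm (Fin n))
      (φ : BraidGroup (n - 1) → (Fin n → ZMod r)),
      (∀ k : ℕ, ∀ hk : k + 1 < n,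
        π (braidGen k) = Equiv.swap ⟨k, by omega⟩ ⟨k + 1, hk⟩) ∧
      (∀ k : ℕ, ∀ hk : k + 1 < n,
        φ (braidGen k) = Pi.single (⟨k + 1, hk⟩ : Fin n) 1) ∧
      (∀ α β : BraidGroup (n - 1),
        φ (α * β) = φ α + fun t => φ β ((π α)⁻¹ t)) ∧
      (∀ β : BraidGroup (n - 1), φ β = 0 → π β ∈ alternatingGroup (Fin n)) := by
  have hrels : ∀ w ∈ braidRels (n - 1), FreeGroup.lift (gens n r) w = 1 := by
    rintro w (⟨i, j, hij, rfl⟩ | ⟨i, j, hij, rfl⟩)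
    · simp only [map_mul, map_inv, FreeGroup.lift_apply_of]
      rw [mul_inv_eq_one, mul_inv_eq_iff_eq_mul]
      exact gens_comm n r i j hij
    · simp only [map_mul, map_inv, FreeGroup.lift_apply_of]
      rw [mul_inv_eq_one]
      exact gens_braid n r i j hij
  let Ψ : BraidGroup (n - 1) →* Gsd n r := PresentedGroup.toGroup hrels
  let π : BraidGroup (n - 1) →* Equiv.Perm (Fin n) := SemidirectProduct.rightHom.comp Ψ
  let φ : BraidGroup (n - 1) → (Fin n → ZMod r) :=
    fun β => Multiplicative.toAdd ((Ψ β).left)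
  have hΨgen : ∀ k : ℕ, ∀ hk : k + 1 < n, Ψ (braidGen k) = gens n r ⟨k, by omega⟩ := by
    intro k hk
    rw [braidGen, dif_pos (by omega : k < n - 1)]
    exact PresentedGroup.toGroup.of hrels
  have hπ : ∀ k : ℕ, ∀ hk : k + 1 < n,
      π (braidGen k) = Equiv.swap ⟨k, by omega⟩ ⟨k + 1, hk⟩ := by
    intro k hk
    show SemidirectProduct.rightHom (Ψ (braidGen k)) = _
    rw [hΨgen k hk]; rfl
  have hφ : ∀ k : ℕ, ∀ hk : k + 1 < n,
      φ (braidGen k) = Pi.single (⟨k + 1, hk⟩ : Fin n) 1 := by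
    intro k hk
    show Multiplicative.toAdd ((Ψ (braidGen k)).left) = _
    rw [hΨgen k hk]; rfl
  have hcoc : ∀ α β : BraidGroup (n - 1),
      φ (α * β) = φ α + fun t => φ β ((π α)⁻¹ t) := by
    intro α β
    funext t
    show (Ψ (α * β)).left t = φ α t + φ β ((π α)⁻¹ t)
    rw [map_mul]
    rfl
  refine ⟨π, φ, hπ, hφ, hcoc, ?_⟩
  -- the parity argument
  let s : (Fin n → ZMod r) → ZMod 2 := fun f => ZMod.castHom hr (ZMod 2) (∑ t, f t)
  have hs_add : ∀ f g, s (f + g) = s f + s g := by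
    intro f g
    simp only [s, Pi.add_apply, Finset.sum_add_distrib, map_add]
  have hs_comp : ∀ (f : Fin n → ZMod r) (σ : Equiv.Perm (Fin n)),
      s (fun t => f (σ t)) = s f := by
    intro f σ
    simp only [s]
    rw [Equiv.sum_comp σ f]
  have hpow : ∀ a b : ZMod 2, (-1 : ℤˣ) ^ (a + b).val = (-1 : ℤˣ) ^ a.val * (-1) ^ b.val := by
    decide
  have hneg : ∀ a : ZMod 2, (-a) = a := by decide
  have hφ1 : φ 1 = 0 := by
    show Multiplicative.toAdd ((Ψ 1).left) = 0
    rw [map_one]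
    rfl
  have hs0 : s 0 = 0 := by simp [s]
  let K : Subgroup (BraidGroup (n - 1)) :=
    { carrier := { β | Equiv.Perm.sign (π β) = (-1 : ℤˣ) ^ (s (φ β)).val }
      one_mem' := by
        simp only [Set.mem_setOf_eq, map_one, hφ1, hs0]
        rfl
      mul_mem' := by
        intro a b ha hb
        simp only [Set.mem_setOf_eq] at *
        rw [map_mul, map_mul, ha, hb, hcoc a b, hs_add, hs_comp (φ b) (π a)⁻¹, hpow]
      inv_mem' := by
        intro a ha
        simp only [Set.mem_setOf_eq] at *
        have h0 : (0 : Fin n → ZMod r) = φ a + fun t => φ a⁻¹ ((π a)⁻¹ t) := by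
          rw [← hcoc a a⁻¹, mul_inv_cancel, hφ1]
        have hsa : s (φ a⁻¹) = s (φ a) := by
          have h2 := congrArg s h0
          rw [hs_add, hs_comp (φ a⁻¹) (π a)⁻¹, hs0] at h2
          rw [eq_neg_of_add_eq_zero_right h2.symm, hneg]
        rw [hsa, map_inv, map_inv, ha, ← inv_pow, inv_neg, inv_one]
      }
  have hK : ∀ β, β ∈ K := by
    have hclos : Subgroup.closure (Set.range (PresentedGroup.of (rels := braidRels (n - 1)))) = ⊤ :=
      PresentedGroup.closure_range_of _
    intro β
    have : β ∈ (⊤ : Subgroup (BraidGroup (n - 1))) := trivial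
    rw [← hclos] at this
    refine Subgroup.closure_le K |>.mpr ?_ this
    rintro x ⟨i, rfl⟩
    have hk : (i : ℕ) + 1 < n := by omega
    have hbg : (PresentedGroup.of i : BraidGroup (n - 1)) = braidGen (i : ℕ) := by
      rw [braidGen, dif_pos (show (i : ℕ) < n - 1 from i.isLt), Fin.eta]
    show Equiv.Perm.sign (π (PresentedGroup.of i))
        = (-1 : ℤˣ) ^ (s (φ (PresentedGroup.of i))).val
    rw [hbg, hπ _ hk, hφ _ hk]
    have hsf : s (Pi.single (⟨(i : ℕ) + 1, hk⟩ : Fin n) (1 : ZMod r)) = 1 := by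
      have hsum : (∑ t, Pi.single (⟨(i : ℕ) + 1, hk⟩ : Fin n) (1 : ZMod r) t) = 1 := by
        simp [Finset.sum_pi_single']
      show ZMod.castHom hr (ZMod 2) _ = 1
      rw [hsum, map_one]
    rw [hsf, Equiv.Perm.sign_swap (by simp [Fin.ext_iff])]
    rfl
  intro β hβ0
  have := hK β
  rw [Equiv.Perm.mem_alternatingGroup]
  have h0 : s (φ β) = 0 := by rw [hβ0]; simp [s]
  rw [show (β ∈ K) = (Equiv.Perm.sign (π β) = (-1 : ℤˣ) ^ (s (φ β)).val) from rfl] at this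
  rw [this, h0]
  rfl
end
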